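/- Let k ≥ 5, f_0 as above, f_r = D^r·f_0 with D = ((k+2)y² − 2kz)∂/∂y + (3k+4)yz ∂/∂z. Then f_2 = p(y,z)·f_0 + q(y)·f_1, where p(y,z) = −(k+1)(k+2)²((k+1)y² + kz) and q(y) = (k+2)(2k+3)y. Consequently, f_r ∈ ℂ[y,z]f_0 + ℂ[y,z]f_1 for all r ≥ 0. -/

import Mathlib

/-!
Write `n = k + 1`. The coefficients `cⱼ` of `f₀` satisfy `(j+1)² cⱼ₊₁ = -(n-2j)(n-2j-1) cⱼ`, and
`f₀` is weighted homogeneous of degree `n` for the weights `y ↦ 1`, `z ↦ 2`. Hence `f = f₀` solves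
  `y f_y + 2 z f_z = n f`  and  `∂_z (z f_z) + f_yy = 0`.
Differentiating the Euler relation in `y` and in `z` gives, together with the second equation,
three linear relations which express `D² f` through `f`, `f_y`, `f_z`; this yields `f₂ = p f₀ + q f₁`
for every solution `f` of the two equations. Since `D` is a derivation, the identity makes the ideal
`(f₀, f₁)` stable under `D`, so it contains every `f_r`.
-/

open MvPolynomial

/-- The operator `D = ((k+2)y² − 2kz) ∂/∂y + (3k+4) yz ∂/∂z` on `ℂ[y,z]`. -/
noncomputable def D2 (k : ℂ) : MvPolynomial (Fin 2) ℂ → MvPolynomial (Fin 2) ℂ :=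
  fun p => (C (k + 2) * X 0 ^ 2 - C (2 * k) * X 1) * pderiv 0 p
    + C (3 * k + 4) * X 0 * X 1 * pderiv 1 p

/-- `f₀(y,z) = Σⱼ (−1)ʲ (k+1)!/((k+1−2j)!(j!)²) y^{k+1−2j} zʲ`. -/
noncomputable def f0 (k : ℕ) : MvPolynomial (Fin 2) ℂ :=
  ∑ j ∈ Finset.range ((k + 1) / 2 + 1),
    C ((-1) ^ j * (Nat.factorial (k + 1) : ℂ) /
      (Nat.factorial (k + 1 - 2 * j) * (Nat.factorial j) ^ 2)) *
    X 0 ^ (k + 1 - 2 * j) * X 1 ^ j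

open Finset Nat

theorem Derivation.map_ofNat {R A M : Type*} [CommSemiring R] [CommSemiring A] [AddCommMonoid M]
    [Algebra R A] [Module A M] [Module R M] (D : Derivation R A M) (n : ℕ) [n.AtLeastTwo] :
    D (no_index (OfNat.ofNat n)) = 0 :=
  D.map_natCast n

theorem Derivation.iterate_mem_span_pair {R A : Type*} [CommSemiring R] [CommRing A] [Algebra R A]
    (D : Derivation R A A) {f : A} (h : D (D f) ∈ Ideal.span {f, D f}) (r : ℕ) :
    D^[r] f ∈ Ideal.span {f, D f} := by
  set I := Ideal.span {f, D f}
  have hf : f ∈ I := Ideal.subset_span (Set.mem_insert _ _)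
  have hDf : D f ∈ I := Ideal.subset_span (Set.mem_insert_of_mem _ rfl)
  have hstable : ∀ a ∈ I, D a ∈ I := by
    intro a ha
    obtain ⟨u, v, rfl⟩ := Ideal.mem_span_pair.mp ha
    simp only [map_add, Derivation.leibniz, smul_eq_mul]
    exact add_mem (add_mem (I.mul_mem_left _ hDf) (I.mul_mem_right _ hf))
      (add_mem (I.mul_mem_left _ h) (I.mul_mem_right _ hDf))
  induction r with
  | zero => exact hf
  | succ r ih => exact Function.iterate_succ_apply' D r f ▸ hstable _ ih

theorem MvPolynomial.pderiv_pderiv_comm {R σ : Type*} [CommRing R] (i j : σ)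
    (p : MvPolynomial σ R) : pderiv i (pderiv j p) = pderiv j (pderiv i p) := by
  have h : ⁅pderiv i, pderiv j⁆ = (0 : Derivation R (MvPolynomial σ R) _) :=
    derivation_ext fun l => by
      classical
      rw [Derivation.commutator_apply]
      simp only [pderiv_X, Pi.single_apply]
      split_ifs <;> simp
  simpa [Derivation.commutator_apply, sub_eq_zero] using congr($h p)

section Monomial

variable {R : Type*} [CommSemiring R] (c : R) (a b : ℕ)

theorem pderiv_zero_C_mul_X_pow_mul_X_pow :
    pderiv 0 (C c * X 0 ^ a * X 1 ^ b : MvPolynomial (Fin 2) R) =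
      C (c * a) * X 0 ^ (a - 1) * X 1 ^ b := by
  simp; ring

theorem pderiv_one_C_mul_X_pow_mul_X_pow :
    pderiv 1 (C c * X 0 ^ a * X 1 ^ b : MvPolynomial (Fin 2) R) =
      C (c * b) * X 0 ^ a * X 1 ^ (b - 1) := by
  simp; ring

theorem X_zero_mul_pderiv_zero_C_mul_X_pow_mul_X_pow :
    X 0 * pderiv 0 (C c * X 0 ^ a * X 1 ^ b : MvPolynomial (Fin 2) R) =
      C (c * a) * X 0 ^ a * X 1 ^ b := by
  rw [pderiv_zero_C_mul_X_pow_mul_X_pow]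
  cases a <;> simp [pow_succ]; ring

theorem X_one_mul_pderiv_one_C_mul_X_pow_mul_X_pow :
    X 1 * pderiv 1 (C c * X 0 ^ a * X 1 ^ b : MvPolynomial (Fin 2) R) =
      C (c * b) * X 0 ^ a * X 1 ^ b := by
  rw [pderiv_one_C_mul_X_pow_mul_X_pow]
  cases b <;> simp [pow_succ]; ring

end Monomial

noncomputable def D2Derivation (k : ℂ) :
    Derivation ℂ (MvPolynomial (Fin 2) ℂ) (MvPolynomial (Fin 2) ℂ) :=
  (C (k + 2) * X 0 ^ 2 - C (2 * k) * X 1 : MvPolynomial (Fin 2) ℂ) • pderiv 0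
    + (C (3 * k + 4) * X 0 * X 1 : MvPolynomial (Fin 2) ℂ) • pderiv 1

theorem coe_D2Derivation (k : ℂ) : ⇑(D2Derivation k) = D2 k := rfl

theorem D2_D2_eq_of_euler_of_pde (k : ℂ) (f : MvPolynomial (Fin 2) ℂ)
    (heuler : X 0 * pderiv 0 f + 2 * X 1 * pderiv 1 f = C (k + 1) * f)
    (hpde : pderiv 1 (X 1 * pderiv 1 f) + pderiv 0 (pderiv 0 f) = 0) :
    D2 k (D2 k f) =
      (-(C ((k + 1) * (k + 2) ^ 2)) * (C (k + 1) * X 0 ^ 2 + C k * X 1)) * f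
      + (C ((k + 2) * (2 * k + 3)) * X 0) * D2 k f := by
  have heuler₀ := congr(pderiv 0 $heuler)
  have heuler₁ := congr(pderiv 1 $heuler)
  simp only [D2, map_add, map_sub, map_mul, map_pow, map_ofNat, map_one, Derivation.map_ofNat,
    Derivation.map_one_eq_zero, pderiv_mul, pderiv_C, pderiv_pow, pderiv_X_self,
    pderiv_X_of_ne (show (1 : Fin 2) ≠ 0 by decide), pderiv_X_of_ne (show (0 : Fin 2) ≠ 1 by decide)]
    at heuler₀ heuler₁ heuler hpde ⊢
  rw [pderiv_pderiv_comm 1 0] at heuler₁ ⊢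
  -- `heuler₀`, `heuler₁`, `hpde` form a linear system in `f_yy, f_yz, f_zz` of determinant
  -- `z (y² + 4z)`; the multipliers below eliminate these second derivatives from `D² f`.
  linear_combination ((C k + 2) ^ 2 * X 0 ^ 3 - C k * (5 * C k + 8) * X 0 * X 1) * heuler₀
    + (4 * (C k + 1) * (C k + 2) * X 0 ^ 2 * X 1 - 2 * C k ^ 2 * X 1 ^ 2) * heuler₁
    + C k ^ 2 * X 1 * (X 0 ^ 2 + 4 * X 1) * hpde
    - (C k + 2) ^ 2 * ((C k + 1) * X 0 ^ 2 + C k * X 1) * heuler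

noncomputable def f0Coeff (n j : ℕ) : ℂ := (-1) ^ j * (n ! : ℂ) / ((n - 2 * j)! * (j ! : ℂ) ^ 2)

theorem f0_eq_sum (k : ℕ) :
    f0 k = ∑ j ∈ range ((k + 1) / 2 + 1),
      C (f0Coeff (k + 1) j) * X 0 ^ (k + 1 - 2 * j) * X 1 ^ j :=
  rfl

theorem f0Coeff_succ {n i : ℕ} (h : 2 * (i + 1) ≤ n) :
    f0Coeff n (i + 1) * (i + 1 : ℕ) * (i + 1 : ℕ)
      + f0Coeff n i * (n - 2 * i : ℕ) * (n - 2 * i - 1 : ℕ) = 0 := by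
  obtain ⟨m, rfl⟩ : ∃ m, n = m + 2 * (i + 1) := ⟨n - 2 * (i + 1), by omega⟩
  have e1 : m + 2 * (i + 1) - 2 * (i + 1) = m := by omega
  have e2 : m + 2 * (i + 1) - 2 * i = m + 1 + 1 := by omega
  simp only [f0Coeff, e1, e2, factorial_succ, pow_succ]
  push_cast
  have : (m : ℂ) + 1 + 1 ≠ 0 := by norm_cast
  field_simp
  ring

theorem f0_euler (k : ℕ) :
    X 0 * pderiv 0 (f0 k) + 2 * X 1 * pderiv 1 (f0 k) = C ((k : ℂ) + 1) * f0 k := by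
  simp only [f0_eq_sum, map_sum, mul_sum, ← sum_add_distrib,
    mul_assoc (2 : MvPolynomial (Fin 2) ℂ), X_zero_mul_pderiv_zero_C_mul_X_pow_mul_X_pow,
    X_one_mul_pderiv_one_C_mul_X_pow_mul_X_pow]
  refine sum_congr rfl fun j hj => ?_
  have hweight : ((k + 1 - 2 * j : ℕ) : ℂ) + 2 * j = k + 1 := by
    rw [Nat.cast_sub (by rw [mem_range] at hj; omega)]; push_cast; ring
  have hweight' := congrArg (C : ℂ → MvPolynomial (Fin 2) ℂ) hweight
  simp only [map_add, map_mul, map_natCast, map_ofNat, map_one] at hweight' ⊢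
  linear_combination (C (f0Coeff (k + 1) j) * X 0 ^ (k + 1 - 2 * j) * X 1 ^ j) * hweight'

theorem f0_pde (k : ℕ) :
    pderiv 1 (X 1 * pderiv 1 (f0 k)) + pderiv 0 (pderiv 0 (f0 k)) = 0 := by
  rw [f0_eq_sum]
  simp only [map_sum, mul_sum, X_one_mul_pderiv_one_C_mul_X_pow_mul_X_pow]
  simp only [pderiv_zero_C_mul_X_pow_mul_X_pow, pderiv_one_C_mul_X_pow_mul_X_pow]
  rw [sum_range_succ', sum_range_succ, show k + 1 - 2 * ((k + 1) / 2) - 1 = 0 by omega]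
  simp only [Nat.cast_zero, mul_zero, map_zero, zero_mul, add_zero, ← sum_add_distrib]
  refine sum_eq_zero fun i hi => ?_
  have hi : 2 * (i + 1) ≤ k + 1 := by rw [mem_range] at hi; omega
  rw [show k + 1 - 2 * i - 1 - 1 = k + 1 - 2 * (i + 1) by omega, Nat.add_sub_cancel, ← add_mul,
    ← add_mul, ← map_add, f0Coeff_succ hi, map_zero, zero_mul, zero_mul]

theorem stmt_14_general (k : ℕ) :
    (D2 (k : ℂ))^[2] (f0 k) =
      (-(C (((k : ℂ) + 1) * ((k : ℂ) + 2) ^ 2)) *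
          (C ((k : ℂ) + 1) * X 0 ^ 2 + C (k : ℂ) * X 1)) * f0 k
      + (C (((k : ℂ) + 2) * (2 * (k : ℂ) + 3)) * X 0) * D2 (k : ℂ) (f0 k) ∧
    ∀ r : ℕ, (D2 (k : ℂ))^[r] (f0 k) ∈ Ideal.span {f0 k, D2 (k : ℂ) (f0 k)} := by
  have hsecond := D2_D2_eq_of_euler_of_pde k (f0 k) (f0_euler k) (f0_pde k)
  refine ⟨hsecond, fun r => ?_⟩
  rw [← coe_D2Derivation] at hsecond ⊢
  exact (D2Derivation k).iterate_mem_span_pair (Ideal.mem_span_pair.mpr ⟨_, _, hsecond.symm⟩) r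

theorem stmt_14 (k : ℕ) (hk : 5 ≤ k) :
    (D2 (k : ℂ))^[2] (f0 k) =
      (-(C (((k : ℂ) + 1) * ((k : ℂ) + 2) ^ 2)) *
          (C ((k : ℂ) + 1) * X 0 ^ 2 + C (k : ℂ) * X 1)) * f0 k
      + (C (((k : ℂ) + 2) * (2 * (k : ℂ) + 3)) * X 0) * D2 (k : ℂ) (f0 k) ∧
    ∀ r : ℕ, (D2 (k : ℂ))^[r] (f0 k) ∈ Ideal.span {f0 k, D2 (k : ℂ) (f0 k)} :=
  stmt_14_general k
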